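/- arXiv:1905.05290 — 8 statements merged into one kernel-verified Lean document; each statement's English description precedes it below -/
import Mathlib

section
/- In any CNF-representation (without auxiliary variables) of the AtMostOne_n function, for each pair of distinct variables x_i, x_j there is a clause containing both the literal ¬x_i and the literal ¬x_j. -/
/-- An assignment satisfies a clause (a set of literals, where a literal is a
variable together with its polarity) if some literal evaluates to true. -/
def ClauseSat {n : ℕ} (a : Fin n → Bool) (C : Finset (Fin n × Bool)) : Prop :=
  ∃ l ∈ C, a l.1 = l.2

/-- A CNF-formula represents a Boolean function without auxiliary variables
if its models are exactly the accepting assignments. -/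
def Represents {n : ℕ} (F : Finset (Finset (Fin n × Bool)))
    (f : (Fin n → Bool) → Prop) : Prop :=
  ∀ a, (∀ C ∈ F, ClauseSat a C) ↔ f a

/-- The AtMostOne function: at most one variable is true. -/
def AtMostOne {n : ℕ} (a : Fin n → Bool) : Prop :=
  (Finset.univ.filter fun i => a i = true).card ≤ 1

lemma amo_single {n : ℕ} (i : Fin n) : AtMostOne (fun k => decide (k = i)) := by
  unfold AtMostOne
  have : (Finset.univ.filter fun k : Fin n => decide (k = i) = true) = {i} := by
    ext k; simp
  rw [this]; simp

/-- In any CNF-representation of AtMostOne, every pair of distinct variables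
occurs negated together in some clause. -/
theorem stmt1 {n : ℕ} (F : Finset (Finset (Fin n × Bool)))
    (hF : Represents F AtMostOne) :
    ∀ i j : Fin n, i ≠ j → ∃ C ∈ F, (i, false) ∈ C ∧ (j, false) ∈ C := by
  intro i j hij
  set c : Fin n → Bool := fun k => decide (k = i ∨ k = j) with hc
  have hnot : ¬ AtMostOne c := by
    unfold AtMostOne
    intro h
    have hsub : ({i, j} : Finset (Fin n)) ⊆
        Finset.univ.filter fun k => c k = true := by
      intro k hk
      simp only [Finset.mem_insert, Finset.mem_singleton] at hk
      simp [hc, hk]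
    have := Finset.card_le_card hsub
    rw [Finset.card_insert_of_notMem (by simpa using hij), Finset.card_singleton] at this
    omega
  have hCbad : ∃ C ∈ F, ¬ ClauseSat c C := by
    by_contra h
    push_neg at h
    exact hnot ((hF c).1 h)
  obtain ⟨C, hCF, hCc⟩ := hCbad
  refine ⟨C, hCF, ?_, ?_⟩
  · -- use assignment with only j true
    have hb : ClauseSat (fun k => decide (k = j)) C :=
      ((hF _).2 (amo_single j)) C hCF
    obtain ⟨l, hlC, hl⟩ := hb
    have hl1 : l.1 ≠ j := by
      intro h
      exact hCc ⟨l, hlC, by simp [hc, h] at hl ⊢; simp [hl]⟩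
    have hl2 : l.2 = false := by simpa [hl1] using hl.symm
    have hli : l.1 = i := by
      by_contra h
      exact hCc ⟨l, hlC, by simp [hc, h, hl1, hl2]⟩
    have : l = (i, false) := Prod.ext hli hl2
    rwa [this] at hlC
  · have hb : ClauseSat (fun k => decide (k = i)) C :=
      ((hF _).2 (amo_single i)) C hCF
    obtain ⟨l, hlC, hl⟩ := hb
    have hl1 : l.1 ≠ i := by
      intro h
      exact hCc ⟨l, hlC, by simp [hc, h] at hl ⊢; simp [hl]⟩
    have hl2 : l.2 = false := by simpa [hl1] using hl.symm
    have hlj : l.1 = j := by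
      by_contra h
      exact hCc ⟨l, hlC, by simp [hc, h, hl1, hl2]⟩
    have : l = (j, false) := Prod.ext hlj hl2
    rwa [this] at hlC
end

section
/- The primal graph of any CNF-representation (without auxiliary variables) of the AtMostOne_n function is the complete graph on the n variables; in particular, its treewidth is n−1. -/
/-- The primal graph of a CNF-formula: vertices are the variables, with an
edge between two distinct variables iff they occur together in some clause. -/
def primalGraph {n : ℕ} (F : Finset (Finset (Fin n × Bool))) :
    SimpleGraph (Fin n) where
  Adj u v := u ≠ v ∧ ∃ C ∈ F, (∃ b, (u, b) ∈ C) ∧ (∃ b, (v, b) ∈ C)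
  symm := by
    constructor
    intro u v h
    exact ⟨h.1.symm, by obtain ⟨C, hC, hu, hv⟩ := h.2; exact ⟨C, hC, hv, hu⟩⟩
  loopless := by constructor; intro u h; exact h.1 rfl

/-- A graph has treewidth at most `w` if it admits a tree decomposition of
width `w` (bags of size at most `w+1`, indexed by a tree, covering all
vertices and edges, with connected occurrence sets). -/
def TreewidthLE {V : Type} (G : SimpleGraph V) (w : ℕ) : Prop :=
  ∃ (ι : Type) (T : SimpleGraph ι) (B : ι → Finset V),
    T.Connected ∧ T.IsAcyclic ∧
    (∀ v, ∃ i, v ∈ B i) ∧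
    (∀ u v, G.Adj u v → ∃ i, u ∈ B i ∧ v ∈ B i) ∧
    (∀ v, (T.induce {i | v ∈ B i}).Connected) ∧
    (∀ i, (B i).card ≤ w + 1)

/-! If `u ≠ v`, the assignment making exactly `u` and `v` true falsifies some clause `C`, while
the assignments making only `u`, resp. only `v`, true satisfy `C`; a clause can only change value
where the assignment changes, so `C` mentions both `u` and `v` and the primal graph is complete.
A single bag gives width `n - 1`. Conversely, in a tree decomposition the occurrence sets of the
vertices of a clique are pairwise intersecting subtrees, so by the Helly property of subtrees some
bag contains the whole clique. -/

namespace SimpleGraph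

variable {V : Type*} {G : SimpleGraph V}

theorem Walk.IsPath.append_of_support_inter {u v w : V} {p : G.Walk u v} {q : G.Walk v w}
    (hp : p.IsPath) (hq : q.IsPath) (h : ∀ x ∈ p.support, x ∈ q.support → x = v) :
    (p.append q).IsPath := by
  have hq' := hq.support_nodup
  rw [← q.cons_tail_support, List.nodup_cons] at hq'
  rw [Walk.isPath_def, Walk.support_append, List.nodup_append]
  refine ⟨hp.support_nodup, hq'.2, fun x hxp y hyq hxy => ?_⟩
  subst hxy
  have hxq : x ∈ q.support := q.cons_tail_support ▸ List.mem_cons_of_mem _ hyq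
  exact hq'.1 (h x hxp hxq ▸ hyq)

theorem Walk.exists_walk_first_mem {S : Set V} {u v : V} (p : G.Walk u v) (hv : v ∈ S) :
    ∃ m ∈ S, ∃ q : G.Walk u m, (∀ x ∈ q.support, x ∈ p.support) ∧
      ∀ x ∈ q.support, x ∈ S → x = m := by
  induction p with
  | nil => exact ⟨_, hv, .nil, by simp, by simp⟩
  | @cons a b c hab p ih =>
    by_cases ha : a ∈ S
    · exact ⟨a, ha, .nil, by simp, by simp⟩
    · obtain ⟨m, hm, q, hqp, hfirst⟩ := ih hv
      refine ⟨m, hm, .cons hab q, ?_, ?_⟩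
      · simp only [Walk.support_cons, List.mem_cons]
        rintro x (rfl | hx)
        exacts [Or.inl rfl, Or.inr (hqp x hx)]
      · simp only [Walk.support_cons, List.mem_cons]
        rintro x (rfl | hx) hxS
        exacts [absurd hxS ha, hfirst x hx hxS]

theorem Reachable.exists_isPath_of_induce {S : Set V} {u v : V} (hu : u ∈ S) (hv : v ∈ S)
    (h : (G.induce S).Reachable ⟨u, hu⟩ ⟨v, hv⟩) :
    ∃ p : G.Walk u v, p.IsPath ∧ ∀ x ∈ p.support, x ∈ S := by
  classical
  obtain ⟨w⟩ := h
  let p : G.Walk u v := w.map (Embedding.induce S).toHom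
  refine ⟨p.bypass, p.bypass_isPath, fun x hx => ?_⟩
  obtain ⟨y, -, rfl⟩ := List.mem_map.mp (Walk.support_map _ w ▸ p.support_bypass_subset_support hx)
  exact y.2

theorem IsAcyclic.support_subset_of_preconnected_induce (hG : G.IsAcyclic) {S : Set V}
    (hS : (G.induce S).Preconnected) {u v : V} (hu : u ∈ S) (hv : v ∈ S) {p : G.Walk u v}
    (hp : p.IsPath) : ∀ x ∈ p.support, x ∈ S := by
  obtain ⟨q, hq, hqS⟩ := Reachable.exists_isPath_of_induce hu hv (hS ⟨u, hu⟩ ⟨v, hv⟩)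
  obtain rfl : p = q := congrArg Subtype.val ((hG.subsingleton_path u v).elim ⟨p, hp⟩ ⟨q, hq⟩)
  exact hqS

theorem IsAcyclic.connected_induce_inter (hG : G.IsAcyclic) {S T : Set V}
    (hS : (G.induce S).Connected) (hT : (G.induce T).Connected) (hST : (S ∩ T).Nonempty) :
    (G.induce (S ∩ T)).Connected := by
  obtain ⟨i, hi⟩ := hST
  rw [connected_iff]
  refine ⟨?_, ⟨⟨i, hi⟩⟩⟩
  rintro ⟨u, huS, huT⟩ ⟨v, hvS, hvT⟩
  obtain ⟨p, hp, hpS⟩ := Reachable.exists_isPath_of_induce huS hvS (hS.preconnected _ _)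
  have hpT := hG.support_subset_of_preconnected_induce hT.preconnected huT hvT hp
  exact (p.induce (S ∩ T) fun x hx => ⟨hpS x hx, hpT x hx⟩).reachable

/-- If `m` is the first vertex of `S₂` on the path from `y ∈ S₁ ∩ S₃` to `x ∈ S₁ ∩ S₂`, then
the path from `y` to `m` followed by the path from `m` to `z ∈ S₂ ∩ S₃` is the path from `y`
to `z`, which lies in `S₃`. -/
theorem IsAcyclic.inter_inter_nonempty (hG : G.IsAcyclic) {S₁ S₂ S₃ : Set V}
    (h₁ : (G.induce S₁).Connected) (h₂ : (G.induce S₂).Connected)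
    (h₃ : (G.induce S₃).Connected) (h₁₂ : (S₁ ∩ S₂).Nonempty) (h₁₃ : (S₁ ∩ S₃).Nonempty)
    (h₂₃ : (S₂ ∩ S₃).Nonempty) : (S₁ ∩ S₂ ∩ S₃).Nonempty := by
  classical
  obtain ⟨x, hx₁, hx₂⟩ := h₁₂
  obtain ⟨y, hy₁, hy₃⟩ := h₁₃
  obtain ⟨z, hz₂, hz₃⟩ := h₂₃
  obtain ⟨p, -, hp₁⟩ := Reachable.exists_isPath_of_induce hy₁ hx₁ (h₁.preconnected _ _)
  obtain ⟨m, hm₂, q, hqp, hfirst⟩ := p.exists_walk_first_mem hx₂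
  obtain ⟨r, hr, hr₂⟩ := Reachable.exists_isPath_of_induce hm₂ hz₂ (h₂.preconnected _ _)
  have hqr : (q.bypass.append r).IsPath :=
    q.bypass_isPath.append_of_support_inter hr fun a ha har =>
      hfirst a (q.support_bypass_subset_support ha) (hr₂ a har)
  have hqr₃ := hG.support_subset_of_preconnected_induce h₃.preconnected hy₃ hz₃ hqr
  refine ⟨m, ⟨hp₁ m (hqp m q.end_mem_support), hm₂⟩, hqr₃ m ?_⟩
  rw [Walk.support_append]
  exact List.mem_append_left _ q.bypass.end_mem_support

/-- Helly property of subtrees. The induction replaces `S` by `S ∩ I a`, which still meets every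
`I b` by the case of three subtrees. -/
theorem IsAcyclic.exists_mem_of_pairwise_inter_nonempty (hG : G.IsAcyclic) {α : Type*}
    (s : Finset α) (I : α → Set V) (hI : ∀ a ∈ s, (G.induce (I a)).Connected)
    (hpair : ∀ a ∈ s, ∀ b ∈ s, (I a ∩ I b).Nonempty) {S : Set V}
    (hS : (G.induce S).Connected) (hSI : ∀ a ∈ s, (S ∩ I a).Nonempty) :
    ∃ i ∈ S, ∀ a ∈ s, i ∈ I a := by
  classical
  induction s using Finset.induction generalizing S with
  | empty =>
    obtain ⟨⟨i, hi⟩⟩ := hS.nonempty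
    exact ⟨i, hi, by simp⟩
  | @insert a s ha ih =>
    simp only [Finset.mem_insert, forall_eq_or_imp] at hI hpair hSI
    have hS' := hG.connected_induce_inter hS hI.1 hSI.1
    obtain ⟨i, ⟨hiS, hia⟩, his⟩ := ih hI.2 (fun b hb c hc => (hpair.2 b hb).2 c hc) hS'
      fun b hb => hG.inter_inter_nonempty hS hI.1 (hI.2 b hb) hSI.1 (hSI.2 b hb) (hpair.1.2 b hb)
    exact ⟨i, hiS, by simpa [hia] using his⟩

end SimpleGraph

theorem treewidthLE_card_sub_one {V : Type} [Fintype V] (G : SimpleGraph V) :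
    TreewidthLE G (Fintype.card V - 1) := by
  have hconn : (⊥ : SimpleGraph Unit).Connected := .of_subsingleton
  refine ⟨Unit, ⊥, fun _ => Finset.univ, hconn, SimpleGraph.isAcyclic_bot,
    fun v => ⟨(), Finset.mem_univ v⟩, fun u v _ => ⟨(), Finset.mem_univ u, Finset.mem_univ v⟩,
    fun v => ?_, fun _ => ?_⟩
  · have : Nonempty ({i | v ∈ (Finset.univ : Finset V)} : Set Unit) := ⟨⟨(), Finset.mem_univ v⟩⟩
    exact .of_subsingleton
  · rw [Finset.card_univ]
    omega

theorem SimpleGraph.IsClique.card_le_of_treewidthLE {V : Type} {G : SimpleGraph V} {w : ℕ}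
    (hw : TreewidthLE G w) {s : Finset V} (hs : G.IsClique (s : Set V)) : s.card ≤ w + 1 := by
  obtain ⟨ι, T, B, hT, hTa, hcover, hedge, hocc, hcard⟩ := hw
  have hpair : ∀ u ∈ s, ∀ v ∈ s, ({i | u ∈ B i} ∩ {i | v ∈ B i}).Nonempty := by
    intro u hu v hv
    by_cases huv : u = v
    · subst huv
      obtain ⟨i, hi⟩ := hcover u
      exact ⟨i, hi, hi⟩
    · exact hedge u v (hs hu hv huv)
  obtain ⟨i, -, hi⟩ := hTa.exists_mem_of_pairwise_inter_nonempty s (fun v => {i | v ∈ B i})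
    (fun v _ => hocc v) hpair ((T.induceUnivIso.connected_iff).mpr hT)
    fun v _ => by rw [Set.univ_inter]; exact hcover v
  exact (Finset.card_le_card fun v hv => hi v hv).trans (hcard i)

theorem ClauseSat.exists_ne_of_not_clauseSat {n : ℕ} {a b : Fin n → Bool}
    {C : Finset (Fin n × Bool)} (hb : ClauseSat b C) (ha : ¬ ClauseSat a C) :
    ∃ l ∈ C, a l.1 ≠ b l.1 := by
  obtain ⟨l, hl, hbl⟩ := hb
  exact ⟨l, hl, fun h => ha ⟨l, hl, h.trans hbl⟩⟩

theorem atMostOne_decide_mem_iff {n : ℕ} (s : Finset (Fin n)) :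
    AtMostOne (fun i => decide (i ∈ s)) ↔ s.card ≤ 1 := by
  simp [AtMostOne]

theorem exists_mem_clause_of_represents_atMostOne {n : ℕ} {F : Finset (Finset (Fin n × Bool))}
    (hF : Represents F AtMostOne) {u v : Fin n} (huv : u ≠ v) :
    ∃ C ∈ F, (∃ b, (u, b) ∈ C) ∧ (∃ b, (v, b) ∈ C) := by
  have h_pair : ¬ AtMostOne (fun i => decide (i ∈ ({u, v} : Finset (Fin n)))) := by
    rw [atMostOne_decide_mem_iff, Finset.card_pair huv]
    omega
  obtain ⟨C, hC, hCfalse⟩ : ∃ C ∈ F, ¬ ClauseSat (fun i => decide (i ∈ ({u, v} : Finset _))) C := by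
    by_contra! h
    exact h_pair ((hF _).mp h)
  have mentions : ∀ x y : Fin n, ({x, y} : Finset (Fin n)) = {u, v} → ∃ b, (x, b) ∈ C := by
    intro x y hxy
    have hy : ClauseSat (fun i => decide (i ∈ ({y} : Finset (Fin n)))) C :=
      (hF _).mpr ((atMostOne_decide_mem_iff _).mpr (Finset.card_singleton y).le) C hC
    obtain ⟨l, hl, hne⟩ := hy.exists_ne_of_not_clauseSat (hxy ▸ hCfalse)
    have : l.1 = x := by
      by_contra hlx
      simp [hlx] at hne
    exact ⟨l.2, this ▸ hl⟩
  exact ⟨C, hC, mentions u v rfl, mentions v u (Finset.pair_comm v u)⟩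

theorem primalGraph_eq_top_of_represents_atMostOne {n : ℕ}
    {F : Finset (Finset (Fin n × Bool))} (hF : Represents F AtMostOne) : primalGraph F = ⊤ := by
  ext u v
  exact ⟨fun h => h.1, fun huv => ⟨huv, exists_mem_clause_of_represents_atMostOne hF huv⟩⟩

/-- The primal graph of any CNF-representation of AtMostOne is the complete
graph on the `n` variables; in particular its treewidth is exactly `n - 1`. -/
theorem stmt2 {n : ℕ} (F : Finset (Finset (Fin n × Bool)))
    (hF : Represents F AtMostOne) :
    primalGraph F = ⊤ ∧
    TreewidthLE (primalGraph F) (n - 1) ∧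
    (∀ w, TreewidthLE (primalGraph F) w → n - 1 ≤ w) := by
  have hcomplete := primalGraph_eq_top_of_represents_atMostOne hF
  refine ⟨hcomplete, by simpa using treewidthLE_card_sub_one (primalGraph F), fun w hw => ?_⟩
  rw [hcomplete] at hw
  have hclique : (⊤ : SimpleGraph (Fin n)).IsClique (Finset.univ : Finset (Fin n)) := by
    rw [Finset.coe_univ, SimpleGraph.isClique_univ]
  have := hclique.card_le_of_treewidthLE hw
  rw [Finset.card_univ, Fintype.card_fin] at this
  omega
end

section
/- The ladder encoding is a correct clausal encoding of AtMostOne_n: for every assignment a : Fin n → Bool with at most one true value there exists an extension to the auxiliary variables y_0,...,y_n satisfying all clauses, and for every assignment with at least two true values no extension satisfies all clauses. -/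
/-- The constraints of the ladder encoding of AtMostOne on input variables
`x : Fin n → Bool` and auxiliary variables `y : Fin (n+1) → Bool`:
for every `i ∈ [n]` the validity clause `¬y_{i-1} ∨ y_i` and the clauses
expressing `x_i ↔ (¬y_{i-1} ∧ y_i)`. -/
def LadderSat {n : ℕ} (x : Fin n → Bool) (y : Fin (n + 1) → Bool) : Prop :=
  (∀ i : Fin n, y i.castSucc = true → y i.succ = true) ∧
  (∀ i : Fin n, x i = (!(y i.castSucc) && y i.succ))

lemma ladder_mono {n : ℕ} {x : Fin n → Bool} {y : Fin (n + 1) → Bool}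
    (h : LadderSat x y) : ∀ b a : Fin (n + 1), a ≤ b → y a = true → y b = true := by
  intro b
  induction b using Fin.induction with
  | zero =>
    intro a ha hy
    have : a = 0 := le_antisymm ha (Fin.zero_le a)
    rwa [this] at hy
  | succ i ih =>
    intro a ha hy
    rcases le_or_gt a i.castSucc with h1 | h1
    · exact h.1 i (ih a h1 hy)
    · have : a = i.succ := by
        apply le_antisymm ha
        rw [Fin.le_def, Fin.val_succ]
        rw [Fin.lt_def, Fin.coe_castSucc] at h1
        omega
      rwa [this] at hy

/-- The ladder encoding is a correct clausal encoding of AtMostOne: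
every assignment with at most one true value extends to the auxiliary
variables so that all clauses hold, and no assignment with at least two
true values has such an extension. -/
theorem stmt3 {n : ℕ} (x : Fin n → Bool) :
    ((Finset.univ.filter fun i => x i = true).card ≤ 1 →
      ∃ y : Fin (n + 1) → Bool, LadderSat x y) ∧
    (2 ≤ (Finset.univ.filter fun i => x i = true).card →
      ¬ ∃ y : Fin (n + 1) → Bool, LadderSat x y) := by
  constructor
  · intro hcard
    have huniq : ∀ a b : Fin n, x a = true → x b = true → a = b := by
      intro a b ha hb
      exact Finset.card_le_one.mp hcard a (by simp [ha]) b (by simp [hb])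
    refine ⟨fun j => decide (∃ k : Fin n, x k = true ∧ (k : ℕ) < (j : ℕ)), ?_, ?_⟩
    · intro i hi
      simp only [decide_eq_true_eq] at hi ⊢
      obtain ⟨k, hk, hlt⟩ := hi
      rw [Fin.coe_castSucc] at hlt
      exact ⟨k, hk, by rw [Fin.val_succ]; omega⟩
    · intro i
      by_cases hx : x i = true
      · rw [hx]
        have h1 : ¬ ∃ k : Fin n, x k = true ∧ (k : ℕ) < (i.castSucc : ℕ) := by
          rintro ⟨k, hk, hlt⟩
          have := huniq k i hk hx
          subst this
          simp at hlt
        have h2 : ∃ k : Fin n, x k = true ∧ (k : ℕ) < (i.succ : ℕ) :=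
          ⟨i, hx, by rw [Fin.val_succ]; omega⟩
        beta_reduce; rw [decide_eq_false h1, decide_eq_true h2]
        rfl
      · simp only [Bool.not_eq_true] at hx
        rw [hx]
        by_cases h1 : ∃ k : Fin n, x k = true ∧ (k : ℕ) < (i.castSucc : ℕ)
        · beta_reduce; rw [decide_eq_true h1]
          simp
        · have h2 : ¬ ∃ k : Fin n, x k = true ∧ (k : ℕ) < (i.succ : ℕ) := by
            rintro ⟨k, hk, hlt⟩
            apply h1
            refine ⟨k, hk, ?_⟩
            rw [Fin.val_succ] at hlt
            rw [Fin.coe_castSucc]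
            have : (k : ℕ) ≠ (i : ℕ) := by
              intro he
              have : k = i := Fin.ext he
              subst this
              rw [hx] at hk; exact Bool.false_ne_true hk
            omega
          beta_reduce; rw [decide_eq_false h1, decide_eq_false h2]
          rfl
  · intro hcard ⟨y, hy⟩
    have hc1 : 1 < (Finset.univ.filter fun i => x i = true).card := by omega
    obtain ⟨a, ha, b, hb, hab⟩ := Finset.one_lt_card.mp hc1
    simp only [Finset.mem_filter, Finset.mem_univ, true_and] at ha hb
    wlog hlt : a < b generalizing a b
    · exact this b a (Ne.symm hab) hb ha (lt_of_le_of_ne (le_of_not_gt hlt) (Ne.symm hab))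
    have h1 : y a.succ = true := by
      have := hy.2 a; rw [ha] at this
      exact (Bool.and_eq_true _ _ |>.mp this.symm).2
    have h2 : y b.castSucc = true := by
      apply ladder_mono hy b.castSucc a.succ _ h1
      rw [Fin.le_def, Fin.val_succ, Fin.coe_castSucc]
      exact hlt
    have h3 := hy.2 b
    rw [hb, h2] at h3
    simp at h3
end

section
/- Let k < n/2 and let (Y, Z) be any partition of the n variables of the cardinality constraint C_n^k with n/3 ≤ |Y| ≤ 2n/3. Then every rectangle cover of C_n^k respecting (Y, Z) has size at least min(k, n/3) + 1. -/
/-!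
Fooling set: with `t = min k (n / 3)` and `p = k - |Z|` (truncated), take the models
`a_0, …, a_t` of `C_n^k` with `p + i` true variables in `Y` and `k - p - i` in `Z`; the bounds
on `k` and `|Y|` are exactly what makes these sizes fit. A rectangle containing `a_i` and `a_j`
(`i < j`) also contains the assignment taking `Y` from `a_j` and `Z` from `a_i`, which has
`k + (j - i) > k` true variables. So the `t + 1` models lie in pairwise distinct rectangles.
-/

/-- A predicate on assignments depends only on the variables in `S` if its
value is unchanged by modifications outside `S`. -/
def DependsOnVars {V : Type} (r : (V → Bool) → Prop) (S : Set V) : Prop :=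
  ∀ a b : V → Bool, (∀ v ∈ S, a v = b v) → (r a ↔ r b)

/-- The cardinality constraint C_n^k: at most k of the n variables are true. -/
def CardLE (n k : ℕ) (a : Fin n → Bool) : Prop :=
  (Finset.univ.filter fun i => a i = true).card ≤ k

section Rectangle

variable {V : Type} {S : Set V} [DecidablePred (· ∈ S)]

theorem DependsOnVars.piecewise_left {r : (V → Bool) → Prop} (hr : DependsOnVars r S)
    {a : V → Bool} (b : V → Bool) (ha : r a) : r (S.piecewise a b) :=
  (hr _ a fun _ hv => S.piecewise_eq_of_mem a b hv).2 ha

theorem DependsOnVars.piecewise_right {r : (V → Bool) → Prop} (hr : DependsOnVars r Sᶜ)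
    (a : V → Bool) {b : V → Bool} (hb : r b) : r (S.piecewise a b) :=
  (hr _ b fun _ hv => S.piecewise_eq_of_notMem a b hv).2 hb

theorem card_le_card_of_fooling {ι κ : Type*} [LinearOrder ι] [Fintype ι] [Fintype κ]
    {f : (V → Bool) → Prop} {r₁ r₂ : κ → (V → Bool) → Prop}
    (hdep : ∀ j, DependsOnVars (r₁ j) S ∧ DependsOnVars (r₂ j) Sᶜ)
    (hcover : ∀ a, f a ↔ ∃ j, r₁ j a ∧ r₂ j a)
    (a : ι → V → Bool) (hmodel : ∀ i, f (a i))
    (hfool : ∀ i i', i < i' → ¬ f (S.piecewise (a i') (a i))) :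
    Fintype.card ι ≤ Fintype.card κ := by
  choose j hj₁ hj₂ using fun i => (hcover (a i)).1 (hmodel i)
  have hne : ∀ i i', i < i' → j i ≠ j i' := fun i i' hlt heq =>
    hfool i i' hlt <| (hcover _).2
      ⟨j i, (hdep _).1.piecewise_left _ (heq ▸ hj₁ i'), (hdep _).2.piecewise_right _ (hj₂ i)⟩
  refine Fintype.card_le_of_injective j fun i i' h => ?_
  by_contra hii'
  rcases lt_or_gt_of_ne hii' with hlt | hlt
  exacts [hne i i' hlt h, hne i' i hlt h.symm]

end Rectangle

section CardinalityConstraint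

variable {n : ℕ}

theorem cardLE_decide_mem (k : ℕ) (T : Finset (Fin n)) :
    CardLE n k (fun v => decide (v ∈ T)) ↔ T.card ≤ k := by
  simp [CardLE]

theorem piecewise_decide_mem_union {Y A A' B B' : Finset (Fin n)} (hA : A ⊆ Y) (hA' : A' ⊆ Y)
    (hB : Disjoint B Y) (hB' : Disjoint B' Y) :
    (Y : Set (Fin n)).piecewise (fun v => decide (v ∈ A ∪ B)) (fun v => decide (v ∈ A' ∪ B')) =
      fun v => decide (v ∈ A ∪ B') := by
  funext v
  by_cases hv : v ∈ Y
  · have hvB' : v ∉ B' := Finset.disjoint_right.1 hB' hv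
    simp [hv, hvB', Finset.disjoint_right.1 hB hv]
  · have hvA : v ∉ A := fun h => hv (hA h)
    have hvA' : v ∉ A' := fun h => hv (hA' h)
    simp [hv, hvA, hvA']

theorem exists_cardLE_fooling (k : ℕ) (Y : Finset (Fin n)) {p t : ℕ} (hY : p + t ≤ Y.card)
    (hZ : k - p ≤ Yᶜ.card) (hk : p + t ≤ k) :
    ∃ a : Fin (t + 1) → Fin n → Bool, (∀ i, CardLE n k (a i)) ∧
      ∀ i i', i < i' → ¬ CardLE n k ((Y : Set (Fin n)).piecewise (a i') (a i)) := by
  have hi : ∀ i : Fin (t + 1), p + i ≤ p + t := fun i => Nat.add_le_add_left i.is_le p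
  choose A hAY hAcard using fun i : Fin (t + 1) => Finset.exists_subset_card_eq ((hi i).trans hY)
  choose B hBZ hBcard using fun i : Fin (t + 1) =>
    Finset.exists_subset_card_eq ((Nat.sub_le_sub_left (Nat.le_add_right p i) k).trans hZ)
  have hBY : ∀ i, Disjoint (B i) Y := fun i => Finset.disjoint_left.2 fun v hv =>
    Finset.mem_compl.1 (hBZ i hv)
  have hcard : ∀ i i', (A i ∪ B i').card = p + i + (k - (p + i')) := fun i i' => by
    rw [Finset.card_union_of_disjoint (Finset.disjoint_of_subset_left (hAY i) (hBY i').symm),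
      hAcard, hBcard]
  refine ⟨fun i v => decide (v ∈ A i ∪ B i), fun i => ?_, fun i i' hlt => ?_⟩
  · rw [cardLE_decide_mem, hcard]
    have := hi i
    omega
  · rw [piecewise_decide_mem_union (hAY i') (hAY i) (hBY i') (hBY i), cardLE_decide_mem, hcard]
    have := hi i
    have : (i : ℕ) < i' := hlt
    omega

end CardinalityConstraint

/-- For k < n/2 and any partition (Y, Z) with n/3 ≤ |Y| ≤ 2n/3, every
rectangle cover of C_n^k respecting (Y, Z) has size at least min(k, n/3)+1. -/
theorem stmt6 (n k s : ℕ) (hk : 2 * k < n)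
    (Y : Finset (Fin n)) (hY1 : n ≤ 3 * Y.card) (hY2 : 3 * Y.card ≤ 2 * n)
    (r1 r2 : Fin s → (Fin n → Bool) → Prop)
    (hdep : ∀ i, DependsOnVars (r1 i) ↑Y ∧ DependsOnVars (r2 i) (↑Y : Set (Fin n))ᶜ)
    (hcover : ∀ a, CardLE n k a ↔ ∃ i, r1 i a ∧ r2 i a) :
    min k (n / 3) + 1 ≤ s := by
  have hZ : Yᶜ.card = n - Y.card := by simp [Finset.card_compl]
  obtain ⟨a, hmodel, hfool⟩ := exists_cardLE_fooling k Y (p := k - Yᶜ.card) (t := min k (n / 3))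
    (by omega) (by omega) (by omega)
  simpa using card_le_card_of_fooling hdep hcover a hmodel hfool
end

section
/- No combinatorial rectangle r_1(Y) ∧ r_2(Z) that implies the cardinality constraint C_n^k can have among its models two assignments (a_i, b_i) and (a_j, b_j) with i < j, where a_i sets exactly i variables of Y to true and b_i sets exactly k−i variables of Z to true. -/
/-! If both assignments satisfied the rectangle, so would the assignment taking its `Y`-part
from the second one and its `Yᶜ`-part from the first; it sets `j + (k - i) > k` variables to
true, contradicting `C_n^k`. -/

/-- A predicate on assignments depends only on the variables in `S` if its
value is unchanged by modifications outside `S`. -/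
def AssignDependsOn {V : Type} (r : (V → Bool) → Prop) (S : Set V) : Prop :=
  ∀ a b : V → Bool, (∀ v ∈ S, a v = b v) → (r a ↔ r b)

namespace AssignDependsOn

variable {V : Type} [DecidableEq V] {r : (V → Bool) → Prop} {S : Finset V}

theorem piecewise_left (h : AssignDependsOn r ↑S) {a : V → Bool} (b : V → Bool) (ha : r a) :
    r (S.piecewise a b) :=
  (h _ _ fun _ hv => S.piecewise_eq_of_mem a b hv).mpr ha

theorem piecewise_right (h : AssignDependsOn r (↑S)ᶜ) (a : V → Bool) {b : V → Bool} (hb : r b) :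
    r (S.piecewise a b) :=
  (h _ _ fun _ hv => S.piecewise_eq_of_notMem a b hv).mpr hb

end AssignDependsOn

theorem Finset.card_filter_piecewise_eq {V : Type} [Fintype V] [DecidableEq V] (Y : Finset V)
    (a b : V → Bool) :
    (univ.filter fun v => Y.piecewise a b v = true).card
      = (Y.filter fun v => a v = true).card + (Yᶜ.filter fun v => b v = true).card := by
  rw [← Y.union_compl, filter_union,
    card_union_of_disjoint (disjoint_filter_filter disjoint_compl_right)]
  congr 2
  · exact filter_congr fun v hv => by rw [Y.piecewise_eq_of_mem a b hv]
  · exact filter_congr fun v hv => by rw [Y.piecewise_eq_of_notMem a b (mem_compl.mp hv)]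

theorem stmt7_general (n k i j : ℕ) (hij : i < j)
    (Y : Finset (Fin n))
    (r1 r2 : (Fin n → Bool) → Prop)
    (h1 : AssignDependsOn r1 ↑Y) (h2 : AssignDependsOn r2 (↑Y : Set (Fin n))ᶜ)
    (himp : ∀ a, r1 a ∧ r2 a → CardLE n k a)
    (ci cj : Fin n → Bool)
    (hci2 : (Yᶜ.filter fun v => ci v = true).card = k - i)
    (hcj1 : (Y.filter fun v => cj v = true).card = j) :
    ¬ ((r1 ci ∧ r2 ci) ∧ (r1 cj ∧ r2 cj)) := by
  rintro ⟨⟨-, h2i⟩, h1j, -⟩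
  have hmixed := himp (Y.piecewise cj ci) ⟨h1.piecewise_left ci h1j, h2.piecewise_right cj h2i⟩
  rw [CardLE, Finset.card_filter_piecewise_eq, hcj1, hci2] at hmixed
  omega

/-- No combinatorial rectangle r1(Y) ∧ r2(Z) implying C_n^k can have among
its models both the assignment (a_i, b_i) (exactly i true variables in Y
and k−i true variables in Z) and (a_j, b_j) for i < j. -/
theorem stmt7 (n k i j : ℕ) (hij : i < j)
    (Y : Finset (Fin n))
    (r1 r2 : (Fin n → Bool) → Prop)
    (h1 : AssignDependsOn r1 ↑Y) (h2 : AssignDependsOn r2 (↑Y : Set (Fin n))ᶜ)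
    (himp : ∀ a, r1 a ∧ r2 a → CardLE n k a)
    (ci cj : Fin n → Bool)
    (hci1 : (Y.filter fun v => ci v = true).card = i)
    (hci2 : (Yᶜ.filter fun v => ci v = true).card = k - i)
    (hcj1 : (Y.filter fun v => cj v = true).card = j)
    (hcj2 : (Yᶜ.filter fun v => cj v = true).card = k - j) :
    ¬ ((r1 ci ∧ r2 ci) ∧ (r1 cj ∧ r2 cj)) :=
  stmt7_general n k i j hij Y r1 r2 h1 h2 himp ci cj hci2 hcj1
end

section
/- For any model a of PERM_n, any combinatorial rectangle R = r_1(Y) ∧ r_2(Z) appearing in a rectangle cover of PERM_n, where a satisfies R: every other model a' of R satisfies I(a') = I(a) and I'(a') = I'(a), where I(a) = {i : x_{i,π_a(i)} ∈ Y} and I'(a) = π_a(I(a)). Consequently R has at most k!·(n−k)! models of PERM_n, where k = |I(a)|. -/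
/-- The permutation matrix assignment associated to a permutation π:
the variable x_{ij} is true iff j = π(i). -/
def permMat {n : ℕ} (π : Equiv.Perm (Fin n)) : Fin n × Fin n → Bool :=
  fun p => decide (π p.1 = p.2)

/-! The rectangle is closed under cut-and-paste: for models `π`, `π'`, the assignment that
agrees with `π` on `Y` and with `π'` off `Y` satisfies both `r1` and `r2`, hence is the matrix
of some permutation `σ`. If `(i, π i) ∈ Y` but `(i, π' i) ∉ Y`, then row `i` of `σ` has its
`1` at both `π i` and `π' i`, which is absurd; the same argument on columns gives
`π(I(π)) ⊆ π'(I(π'))`, and symmetry gives equality. Every model thus maps `I` onto `J = π(I)`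
and `Iᶜ` onto `Jᶜ`, and is determined by the two restricted bijections, whence the bound
`k! (n - k)!`. -/

open Finset Equiv

theorem Equiv.Perm.card_subtype_le_of_forall_mem_iff {α : Type*} [Fintype α] [DecidableEq α]
    (s t : Finset α) (P : Perm α → Prop) (hP : ∀ σ, P σ → ∀ i, i ∈ s ↔ σ i ∈ t) :
    Nat.card {σ // P σ} ≤ (#s).factorial * (Fintype.card α - #s).factorial := by
  rcases isEmpty_or_nonempty {σ // P σ} with h | ⟨⟨σ₀, h₀⟩⟩
  · simp
  let restrict : {σ // P σ} → (s ≃ t) × ({i // i ∉ s} ≃ {j // j ∉ t}) := fun σ =>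
    (σ.1.subtypeEquiv (hP σ.1 σ.2), σ.1.subtypeEquiv fun i => (hP σ.1 σ.2 i).not)
  have restrict_injective : Function.Injective restrict := by
    rintro ⟨σ, hσ⟩ ⟨τ, hτ⟩ h
    refine Subtype.ext (Equiv.ext fun i => ?_)
    by_cases hi : i ∈ s
    · exact congrArg Subtype.val (Equiv.congr_fun (congrArg Prod.fst h) ⟨i, hi⟩)
    · exact congrArg Subtype.val (Equiv.congr_fun (congrArg Prod.snd h) ⟨i, hi⟩)
  calc Nat.card {σ // P σ}
      ≤ Nat.card ((s ≃ t) × ({i // i ∉ s} ≃ {j // j ∉ t})) :=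
        Nat.card_le_card_of_injective restrict restrict_injective
    _ = (#s).factorial * (Fintype.card α - #s).factorial := by
      rw [Nat.card_eq_fintype_card, Fintype.card_prod,
        Fintype.card_equiv (σ₀.subtypeEquiv (hP σ₀ h₀)),
        Fintype.card_equiv (σ₀.subtypeEquiv fun i => (hP σ₀ h₀ i).not),
        Fintype.card_subtype_compl, Fintype.card_coe]

theorem DependsOnVars.piecewise_and {V : Type} [DecidableEq V] {r1 r2 : (V → Bool) → Prop}
    {Y : Finset V} (h1 : DependsOnVars r1 ↑Y) (h2 : DependsOnVars r2 (↑Y : Set V)ᶜ)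
    {a b : V → Bool} (ha : r1 a) (hb : r2 b) :
    r1 (Y.piecewise a b) ∧ r2 (Y.piecewise a b) :=
  ⟨(h1 _ a fun _ hv => Y.piecewise_eq_of_mem a b hv).2 ha,
    (h2 _ b fun _ hv => Y.piecewise_eq_of_notMem a b hv).2 hb⟩

variable {n : ℕ}

/-- `I(π)` in the paper; `permColsIn Y π` is `I'(π) = π(I(π))`. -/
def permRowsIn (Y : Finset (Fin n × Fin n)) (π : Perm (Fin n)) : Finset (Fin n) :=
  univ.filter fun i => (i, π i) ∈ Y

def permColsIn (Y : Finset (Fin n × Fin n)) (π : Perm (Fin n)) : Finset (Fin n) :=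
  (permRowsIn Y π).image π

section Hybrid

variable {Y : Finset (Fin n × Fin n)} {π π' σ : Perm (Fin n)}

theorem apply_eq_iff_of_permMat_eq_piecewise_of_mem
    (hσ : permMat σ = Y.piecewise (permMat π) (permMat π')) {p : Fin n × Fin n}
    (hp : p ∈ Y) :
    σ p.1 = p.2 ↔ π p.1 = p.2 := by
  simpa [permMat, hp] using congrFun hσ p

theorem apply_eq_of_permMat_eq_piecewise_of_notMem
    (hσ : permMat σ = Y.piecewise (permMat π) (permMat π')) {i : Fin n}
    (hi : (i, π' i) ∉ Y) :
    σ i = π' i := by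
  simpa [permMat, hi] using congrFun hσ (i, π' i)

theorem permRowsIn_subset_of_permMat_eq_piecewise
    (hσ : permMat σ = Y.piecewise (permMat π) (permMat π')) :
    permRowsIn Y π ⊆ permRowsIn Y π' := by
  intro i hi
  simp only [permRowsIn, mem_filter, mem_univ, true_and] at hi ⊢
  by_contra hout
  have hσi : σ i = π i := (apply_eq_iff_of_permMat_eq_piecewise_of_mem hσ hi).2 rfl
  have hπ'i : π' i = π i := (apply_eq_of_permMat_eq_piecewise_of_notMem hσ hout).symm.trans hσi
  exact hout (hπ'i ▸ hi)

theorem permColsIn_subset_of_permMat_eq_piecewise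
    (hσ : permMat σ = Y.piecewise (permMat π) (permMat π')) :
    permColsIn Y π ⊆ permColsIn Y π' := by
  intro j hj
  obtain ⟨i, hi, rfl⟩ := mem_image.1 hj
  simp only [permRowsIn, mem_filter, mem_univ, true_and] at hi
  refine mem_image.2 ⟨π'.symm (π i), ?_, π'.apply_symm_apply _⟩
  simp only [permRowsIn, mem_filter, mem_univ, true_and]
  by_contra hout
  have hσi : σ i = π i := (apply_eq_iff_of_permMat_eq_piecewise_of_mem hσ hi).2 rfl
  have hσi' : σ (π'.symm (π i)) = π i := by
    simpa using apply_eq_of_permMat_eq_piecewise_of_notMem hσ hout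
  rw [π'.apply_symm_apply, σ.injective (hσi'.trans hσi.symm)] at hout
  exact hout hi

end Hybrid

section Rectangle

variable {Y : Finset (Fin n × Fin n)} {r1 r2 : (Fin n × Fin n → Bool) → Prop}

theorem permRowsIn_subset_and_permColsIn_subset_of_rectangle
    (h1 : DependsOnVars r1 ↑Y) (h2 : DependsOnVars r2 (↑Y : Set (Fin n × Fin n))ᶜ)
    (himp : ∀ a, r1 a ∧ r2 a → ∃ σ : Perm (Fin n), a = permMat σ)
    {π π' : Perm (Fin n)} (hπ : r1 (permMat π)) (hπ' : r2 (permMat π')) :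
    permRowsIn Y π ⊆ permRowsIn Y π' ∧ permColsIn Y π ⊆ permColsIn Y π' := by
  obtain ⟨σ, hσ⟩ := himp _ (h1.piecewise_and h2 hπ hπ')
  exact ⟨permRowsIn_subset_of_permMat_eq_piecewise hσ.symm,
    permColsIn_subset_of_permMat_eq_piecewise hσ.symm⟩

theorem permRowsIn_eq_and_permColsIn_eq_of_rectangle
    (h1 : DependsOnVars r1 ↑Y) (h2 : DependsOnVars r2 (↑Y : Set (Fin n × Fin n))ᶜ)
    (himp : ∀ a, r1 a ∧ r2 a → ∃ σ : Perm (Fin n), a = permMat σ)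
    {π π' : Perm (Fin n)} (hπ : r1 (permMat π) ∧ r2 (permMat π))
    (hπ' : r1 (permMat π') ∧ r2 (permMat π')) :
    permRowsIn Y π = permRowsIn Y π' ∧ permColsIn Y π = permColsIn Y π' := by
  obtain ⟨hrows, hcols⟩ :=
    permRowsIn_subset_and_permColsIn_subset_of_rectangle h1 h2 himp hπ.1 hπ'.2
  obtain ⟨hrows', hcols'⟩ :=
    permRowsIn_subset_and_permColsIn_subset_of_rectangle h1 h2 himp hπ'.1 hπ.2
  exact ⟨hrows.antisymm hrows', hcols.antisymm hcols'⟩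

end Rectangle

/-- For a rectangle r1(Y) ∧ r2(Z) from a rectangle cover of PERM_n (so the
rectangle implies PERM_n): any two permutation-matrix models π, π' of the
rectangle satisfy I(π) = I(π') and π(I(π)) = π'(I(π')), where
I(π) = {i : x_{i,π(i)} ∈ Y}; consequently the rectangle has at most
k!·(n−k)! models, where k = |I(π)|. -/
theorem stmt8 {n : ℕ} (Y : Finset (Fin n × Fin n))
    (r1 r2 : (Fin n × Fin n → Bool) → Prop)
    (h1 : DependsOnVars r1 ↑Y) (h2 : DependsOnVars r2 (↑Y : Set (Fin n × Fin n))ᶜ)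
    (himp : ∀ a, r1 a ∧ r2 a → ∃ σ : Equiv.Perm (Fin n), a = permMat σ)
    (π π' : Equiv.Perm (Fin n))
    (hπ : r1 (permMat π) ∧ r2 (permMat π))
    (hπ' : r1 (permMat π') ∧ r2 (permMat π')) :
    (Finset.univ.filter fun i => (i, π i) ∈ Y) =
      (Finset.univ.filter fun i => (i, π' i) ∈ Y) ∧
    (Finset.univ.filter fun i => (i, π i) ∈ Y).image (fun i => π i) =
      (Finset.univ.filter fun i => (i, π' i) ∈ Y).image (fun i => π' i) ∧
    Nat.card {σ : Equiv.Perm (Fin n) // r1 (permMat σ) ∧ r2 (permMat σ)} ≤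
      Nat.factorial (Finset.univ.filter fun i => (i, π i) ∈ Y).card *
      Nat.factorial (n - (Finset.univ.filter fun i => (i, π i) ∈ Y).card) := by
  obtain ⟨hrows, hcols⟩ := permRowsIn_eq_and_permColsIn_eq_of_rectangle h1 h2 himp hπ hπ'
  refine ⟨hrows, hcols, ?_⟩
  have hmodels : ∀ τ, r1 (permMat τ) ∧ r2 (permMat τ) →
      ∀ i, i ∈ permRowsIn Y π ↔ τ i ∈ permColsIn Y π := by
    intro τ hτ i
    obtain ⟨hrowsτ, hcolsτ⟩ := permRowsIn_eq_and_permColsIn_eq_of_rectangle h1 h2 himp hπ hτ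
    rw [hrowsτ, hcolsτ]
    exact τ.injective.mem_finset_image.symm
  have hcard := Perm.card_subtype_le_of_forall_mem_iff _ _ _ hmodels
  rwa [Fintype.card_fin] at hcard
end

section
/- Let A be a set of at least (n−1)! permutation-matrix models of PERM_n, each assigning between n/3 and 2n/3 of its true entries to variables in Y, for a fixed subset Y of the variables. Then any rectangle cover of PERM_n respecting the partition (Y, X∖Y) needs at least (n−1)! / ((⌈n/3⌉)!·(⌊2n/3⌋)!) rectangles to cover A; this quantity is at least (1/n)·binom(n, n/3) ≥ (1/n)·3^{n/3}. -/
/-- I(π) for a subset Y of the variables: the rows i whose true entry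
x_{i,π(i)} lies in Y. -/
def rowsInY {n : ℕ} (Y : Finset (Fin n × Fin n)) (π : Equiv.Perm (Fin n)) :
    Finset (Fin n) :=
  Finset.univ.filter fun i => (i, π i) ∈ Y

/-!
If a rectangle `r₁(Y) ∧ r₂(X ∖ Y)` accepts the permutation matrices of `σ` and `τ`, it also
accepts the assignment that agrees with `σ` on `Y` and with `τ` off `Y`. That assignment is the
matrix of a permutation `π`, and since every row and every column of `π` has exactly one true
entry, `σ` and `τ` must have their true entries in `Y` in the same set `I` of rows and the same
set `C` of columns. So a rectangle accepts only permutations mapping `I` onto `C`, at most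
`k! (n - k)!` of them for `k = |I|`, which is at most `⌈n/3⌉! ⌊2n/3⌋!` when `n/3 ≤ k ≤ 2n/3`.
Comparing with `|A| ≥ (n - 1)! = n! / n` gives all three bounds.
-/

open Finset Equiv Nat

theorem Nat.choose_le_choose_of_le_of_le_half {n a b : ℕ} (hab : a ≤ b) (hb : b ≤ n / 2) :
    n.choose a ≤ n.choose b := by
  induction b, hab using Nat.le_induction with
  | base => rfl
  | succ c _ ih => exact (ih (by omega)).trans (choose_le_succ_of_lt_half_left (by omega))

theorem Nat.choose_le_choose_of_le_of_add_le {n a b : ℕ} (hab : a ≤ b) (hn : a + b ≤ n) :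
    n.choose a ≤ n.choose b := by
  rcases le_or_gt b (n / 2) with hb | hb
  · exact choose_le_choose_of_le_of_le_half hab hb
  · rw [← choose_symm (by omega : b ≤ n)]
    exact choose_le_choose_of_le_of_le_half (by omega) (by omega)

theorem Nat.factorial_mul_factorial_le {n a k : ℕ} (hak : a ≤ k) (hk : k ≤ n - a) :
    k ! * (n - k)! ≤ a ! * (n - a)! := by
  have han : a ≤ n := by omega
  refine Nat.le_of_mul_le_mul_right (c := n.choose a) ?_ (choose_pos han)
  calc k ! * (n - k)! * n.choose a
      ≤ k ! * (n - k)! * n.choose k :=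
        Nat.mul_le_mul_left _ (choose_le_choose_of_le_of_add_le hak (by omega))
    _ = n ! := by rw [← choose_mul_factorial_mul_factorial (by omega : k ≤ n)]; ring
    _ = a ! * (n - a)! * n.choose a := by rw [← choose_mul_factorial_mul_factorial han]; ring

theorem Nat.pow_le_choose_of_mul_le {b m n : ℕ} (h : b * m ≤ n) : b ^ m ≤ n.choose m := by
  induction m generalizing n with
  | zero => simp
  | succ m ih =>
    rcases Nat.eq_zero_or_pos b with rfl | hb
    · simp
    obtain ⟨n, rfl⟩ : ∃ n', n = n' + 1 := ⟨n - 1, by rw [mul_add_one] at h; omega⟩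
    refine Nat.le_of_mul_le_mul_right (c := m + 1) ?_ m.succ_pos
    calc b ^ (m + 1) * (m + 1) = b ^ m * (b * (m + 1)) := by ring
      _ ≤ n.choose m * (n + 1) := Nat.mul_le_mul (ih (by rw [mul_add_one] at h; omega)) h
      _ = (n + 1).choose (m + 1) * (m + 1) := by rw [mul_comm, add_one_mul_choose_eq]

theorem Nat.choose_le_mul_of_factorial_pred_le {n a s : ℕ} (hn : n ≠ 0) (ha : a ≤ n)
    (h : (n - 1)! ≤ s * (a ! * (n - a)!)) : n.choose a ≤ n * s := by
  refine Nat.le_of_mul_le_mul_right (c := a ! * (n - a)!) ?_ (by positivity)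
  calc n.choose a * (a ! * (n - a)!) = n ! := by
        rw [← choose_mul_factorial_mul_factorial ha, mul_assoc]
    _ = n * (n - 1)! := (mul_factorial_pred hn).symm
    _ ≤ n * (s * (a ! * (n - a)!)) := Nat.mul_le_mul_left n h
    _ = n * s * (a ! * (n - a)!) := by ring

theorem Finset.card_perm_le_of_forall_apply_mem_iff {α : Type*} [Fintype α] [DecidableEq α]
    {I C : Finset α} (hC : #C = #I) (B : Finset (Perm α)) (hB : ∀ σ ∈ B, ∀ x, σ x ∈ C ↔ x ∈ I) :
    #B ≤ (#I)! * (Fintype.card α - #I)! := by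
  let restrict (σ : B) : (I ↪ C) × (↥Iᶜ ↪ ↥Cᶜ) :=
    (⟨fun x => ⟨σ.1 x, (hB σ σ.2 x).2 x.2⟩,
      fun _ _ h => Subtype.ext (σ.1.injective (congrArg Subtype.val h))⟩,
     ⟨fun x => ⟨σ.1 x, mem_compl.2 (mt (hB σ σ.2 x).1 (mem_compl.1 x.2))⟩,
      fun _ _ h => Subtype.ext (σ.1.injective (congrArg Subtype.val h))⟩)
  have hinj : Function.Injective restrict := by
    rintro ⟨σ, _⟩ ⟨τ, _⟩ h
    ext x
    by_cases hx : x ∈ I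
    · exact congrArg Subtype.val (DFunLike.congr_fun (congrArg Prod.fst h) ⟨x, hx⟩)
    · exact congrArg Subtype.val (DFunLike.congr_fun (congrArg Prod.snd h) ⟨x, mem_compl.2 hx⟩)
  rw [← Fintype.card_coe B]
  calc _ ≤ _ := Fintype.card_le_of_injective restrict hinj
    _ = _ := by simp [Fintype.card_embedding_eq, hC, descFactorial_self]

section Mix

variable {α : Type*} {Y : Set (α × α)} {σ τ π : Perm α}

def IsMix (Y : Set (α × α)) (σ τ π : Perm α) : Prop :=
  ∀ i j, π i = j ↔ (i, j) ∈ Y ∧ σ i = j ∨ (i, j) ∉ Y ∧ τ i = j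

theorem IsMix.mem_iff (h : IsMix Y σ τ π) (i : α) : (i, σ i) ∈ Y ↔ (i, τ i) ∈ Y := by
  constructor
  · intro hσ
    by_contra hτ
    have hσi := (h i (σ i)).2 (Or.inl ⟨hσ, rfl⟩)
    have hτi := (h i (τ i)).2 (Or.inr ⟨hτ, rfl⟩)
    exact hτ (hτi ▸ hσi ▸ hσ)
  · intro hτ
    by_contra hσ
    rcases (h i (π i)).1 rfl with ⟨hY, hσi⟩ | ⟨hY, hτi⟩
    · exact hσ (hσi ▸ hY)
    · exact hY (hτi ▸ hτ)

theorem IsMix.inv (h : IsMix Y σ τ π) : IsMix (Prod.swap ⁻¹' Y) σ⁻¹ τ⁻¹ π⁻¹ := by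
  intro j i
  simp only [Perm.inv_eq_iff_eq, Set.mem_preimage, Prod.swap_prod_mk]
  simpa only [eq_comm] using h i j

theorem IsMix.inv_mem_iff (h : IsMix Y σ τ π) (j : α) : (σ⁻¹ j, j) ∈ Y ↔ (τ⁻¹ j, j) ∈ Y :=
  h.inv.mem_iff j

end Mix

section Rectangle

variable {n : ℕ} {Y : Finset (Fin n × Fin n)} {r₁ r₂ : (Fin n × Fin n → Bool) → Prop}

theorem exists_isMix_of_rectangle (h₁ : DependsOnVars r₁ ↑Y)
    (h₂ : DependsOnVars r₂ (↑Y : Set (Fin n × Fin n))ᶜ)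
    (himp : ∀ a, r₁ a ∧ r₂ a → ∃ π : Perm (Fin n), a = permMat π)
    {σ τ : Perm (Fin n)} (hσ : r₁ (permMat σ)) (hτ : r₂ (permMat τ)) :
    ∃ π, IsMix ↑Y σ τ π := by
  classical
  let m : Fin n × Fin n → Bool := fun p => if p ∈ Y then permMat σ p else permMat τ p
  have hm₁ : r₁ m := (h₁ _ _ fun p hp => by simp [m, Finset.mem_coe.1 hp]).1 hσ
  have hm₂ : r₂ m := (h₂ _ _ fun p hp => by simp_all [m]).1 hτ
  obtain ⟨π, hπ⟩ := himp m ⟨hm₁, hm₂⟩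
  refine ⟨π, fun i j => ?_⟩
  have hij : m (i, j) = permMat π (i, j) := congrFun hπ (i, j)
  by_cases hY : (i, j) ∈ Y <;> simp only [m, permMat, hY, if_true, if_false] at hij <;>
    simp [hY, decide_eq_decide.1 hij]

theorem IsMix.apply_mem_map_rowsInY_iff {σ τ π : Perm (Fin n)} (h : IsMix ↑Y σ τ π)
    (x : Fin n) : σ x ∈ (rowsInY Y τ).map τ.toEmbedding ↔ x ∈ rowsInY Y τ := by
  simp only [mem_map_equiv, rowsInY, mem_filter, mem_univ, true_and, apply_symm_apply]
  calc (τ.symm (σ x), σ x) ∈ Y ↔ (σ.symm (σ x), σ x) ∈ Y := (h.inv_mem_iff (σ x)).symm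
    _ ↔ (x, σ x) ∈ Y := by rw [symm_apply_apply]
    _ ↔ (x, τ x) ∈ Y := h.mem_iff x

theorem card_le_factorial_mul_factorial_of_rectangle {a : ℕ} (h₁ : DependsOnVars r₁ ↑Y)
    (h₂ : DependsOnVars r₂ (↑Y : Set (Fin n × Fin n))ᶜ)
    (himp : ∀ a, r₁ a ∧ r₂ a → ∃ π : Perm (Fin n), a = permMat π)
    (B : Finset (Perm (Fin n))) (hB : ∀ σ ∈ B, r₁ (permMat σ) ∧ r₂ (permMat σ))
    (hbal : ∀ σ ∈ B, a ≤ #(rowsInY Y σ) ∧ #(rowsInY Y σ) ≤ n - a) :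
    #B ≤ a ! * (n - a)! := by
  obtain rfl | ⟨σ₀, hσ₀⟩ := B.eq_empty_or_nonempty
  · simp
  set I := rowsInY Y σ₀
  have hB' : ∀ σ ∈ B, ∀ x, σ x ∈ I.map σ₀.toEmbedding ↔ x ∈ I := fun σ hσ => by
    obtain ⟨π, hπ⟩ := exists_isMix_of_rectangle h₁ h₂ himp (hB σ hσ).1 (hB σ₀ hσ₀).2
    exact hπ.apply_mem_map_rowsInY_iff
  obtain ⟨hlo, hhi⟩ := hbal σ₀ hσ₀
  calc #B ≤ (#I)! * (Fintype.card (Fin n) - #I)! :=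
        card_perm_le_of_forall_apply_mem_iff (card_map _) B hB'
    _ = (#I)! * (n - #I)! := by rw [Fintype.card_fin]
    _ ≤ a ! * (n - a)! := factorial_mul_factorial_le hlo (by omega)

theorem card_le_mul_of_rectangle_cover {a s : ℕ} (A : Finset (Perm (Fin n)))
    (hbal : ∀ σ ∈ A, a ≤ #(rowsInY Y σ) ∧ #(rowsInY Y σ) ≤ n - a)
    (r₁ r₂ : Fin s → (Fin n × Fin n → Bool) → Prop)
    (hdep : ∀ i, DependsOnVars (r₁ i) ↑Y ∧ DependsOnVars (r₂ i) (↑Y : Set (Fin n × Fin n))ᶜ)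
    (himp : ∀ i a, r₁ i a ∧ r₂ i a → ∃ σ : Perm (Fin n), a = permMat σ)
    (hcov : ∀ σ ∈ A, ∃ i, r₁ i (permMat σ) ∧ r₂ i (permMat σ)) :
    #A ≤ s * (a ! * (n - a)!) := by
  classical
  let covered (i : Fin s) := {σ ∈ A | r₁ i (permMat σ) ∧ r₂ i (permMat σ)}
  have hA : A ⊆ univ.biUnion covered := fun σ hσ => by
    obtain ⟨i, hi⟩ := hcov σ hσ
    exact mem_biUnion.2 ⟨i, mem_univ i, mem_filter.2 ⟨hσ, hi⟩⟩
  calc #A ≤ #(univ.biUnion covered) := card_le_card hA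
    _ ≤ s * (a ! * (n - a)!) := by
      simpa using card_biUnion_le_card_mul univ covered _ fun i _ =>
        card_le_factorial_mul_factorial_of_rectangle (hdep i).1 (hdep i).2 (himp i) (covered i)
          (fun σ hσ => (mem_filter.1 hσ).2) (fun σ hσ => hbal σ (mem_filter.1 hσ).1)

end Rectangle

/-- Let A be a set of at least (n−1)! permutation models of PERM_n, each
with between n/3 and 2n/3 of its true entries inside Y.  Any rectangle
cover of PERM_n respecting (Y, X∖Y) needs at least
(n−1)!/(⌈n/3⌉!·⌊2n/3⌋!) rectangles to cover A, a quantity which is at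
least (1/n)·binom(n,⌈n/3⌉) ≥ (1/n)·3^{n/3}. -/
theorem stmt9 (n s : ℕ) (hn : 3 ≤ n) (Y : Finset (Fin n × Fin n))
    (A : Finset (Equiv.Perm (Fin n)))
    (hA : Nat.factorial (n - 1) ≤ A.card)
    (hbal : ∀ σ ∈ A, n ≤ 3 * (rowsInY Y σ).card ∧ 3 * (rowsInY Y σ).card ≤ 2 * n)
    (r1 r2 : Fin s → (Fin n × Fin n → Bool) → Prop)
    (hdep : ∀ i, DependsOnVars (r1 i) ↑Y ∧
      DependsOnVars (r2 i) (↑Y : Set (Fin n × Fin n))ᶜ)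
    (himp : ∀ i a, r1 i a ∧ r2 i a → ∃ σ : Equiv.Perm (Fin n), a = permMat σ)
    (hcov : ∀ σ ∈ A, ∃ i, r1 i (permMat σ) ∧ r2 i (permMat σ)) :
    Nat.factorial (n - 1) ≤
      s * (Nat.factorial ((n + 2) / 3) * Nat.factorial (2 * n / 3)) ∧
    Nat.choose n ((n + 2) / 3) ≤ n * s ∧
    3 ^ (n / 3) ≤ n * s := by
  set a := (n + 2) / 3
  rw [show 2 * n / 3 = n - a by omega]
  have hbal' : ∀ σ ∈ A, a ≤ #(rowsInY Y σ) ∧ #(rowsInY Y σ) ≤ n - a := fun σ hσ => by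
    have := hbal σ hσ
    omega
  have hfac : (n - 1)! ≤ s * (a ! * (n - a)!) :=
    hA.trans (card_le_mul_of_rectangle_cover A hbal' r1 r2 hdep himp hcov)
  have hchoose : n.choose a ≤ n * s := choose_le_mul_of_factorial_pred_le (by omega) (by omega) hfac
  refine ⟨hfac, hchoose, ?_⟩
  calc 3 ^ (n / 3) ≤ n.choose (n / 3) := pow_le_choose_of_mul_le (by omega)
    _ ≤ n.choose a := choose_le_choose_of_le_of_add_le (by omega) (by omega)
    _ ≤ n * s := hchoose
end

section
/- Every complete structured DNNF D of width k computing a Boolean function f satisfies width(D) ≥ 2^{cc_best^{1/3}(f)}, where cc_best^{1/3}(f) is the minimum over all partitions (Y,Z) of the variables with min(|Y|,|Z|) ≥ |X|/3 of cc(f,(Y,Z)). -/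
/-- A complete structured DNNF together with its v-tree (see the paper):
literal gates at the leaves, ∨-gates given by lists of ∧-gates (pairs of
child-gate indices) at internal nodes. -/
inductive SDNNF (V : Type) : Type
  | leaf (x : V) (gs : List Bool) : SDNNF V
  | node (l r : SDNNF V) (gs : List (List (ℕ × ℕ))) : SDNNF V

namespace SDNNF

/-- The leaf labels of the underlying v-tree, i.e. the variables. -/
def leaves {V : Type} : SDNNF V → List V
  | .leaf x _ => [x]
  | .node l r _ => l.leaves ++ r.leaves

/-- The width: the maximal number of gates in any block μ(t). -/
def width {V : Type} : SDNNF V → ℕ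
  | .leaf _ gs => gs.length
  | .node l r gs => max gs.length (max l.width r.width)

/-- Every block is nonempty (in particular the circuit has an output gate). -/
def Proper {V : Type} : SDNNF V → Prop
  | .leaf _ gs => gs ≠ []
  | .node l r gs => gs ≠ [] ∧ l.Proper ∧ r.Proper

/-- Satisfaction of the `i`-th gate of the top block under an assignment. -/
def gateSat {V : Type} : SDNNF V → (V → Bool) → ℕ → Prop
  | .leaf x gs, a, i => ∃ b, gs[i]? = some b ∧ a x = b
  | .node l r gs, a, i =>
      ∃ c, gs[i]? = some c ∧ ∃ p ∈ c, l.gateSat a p.1 ∧ r.gateSat a p.2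

end SDNNF

/-- A predicate on assignments depends only on the variables in `S`. -/
def PredDependsOn {V : Type} (r : (V → Bool) → Prop) (S : Set V) : Prop :=
  ∀ a b : V → Bool, (∀ v ∈ S, a v = b v) → (r a ↔ r b)

/-- The minimum size of a rectangle cover of `f` respecting the partition
`(Y, Yᶜ)`. -/
noncomputable def minCoverSize {V : Type} (f : (V → Bool) → Prop)
    (Y : Set V) : ℕ :=
  sInf {s | ∃ r1 r2 : Fin s → (V → Bool) → Prop,
    (∀ i, PredDependsOn (r1 i) Y ∧ PredDependsOn (r2 i) Yᶜ) ∧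
    ∀ a, f a ↔ ∃ i, r1 i a ∧ r2 i a}

/-- The best-case non-deterministic communication complexity with
1/3-balance: the minimum over all partitions `(Y, Yᶜ)` with
`min(|Y|,|Yᶜ|) ≥ |V|/3` of `log₂` of the minimum rectangle cover size. -/
noncomputable def ccBest {V : Type} [Fintype V] [DecidableEq V]
    (f : (V → Bool) → Prop) : ℕ :=
  sInf {m | ∃ Y : Finset V,
    Fintype.card V ≤ 3 * Y.card ∧
    Fintype.card V ≤ 3 * (Fintype.card V - Y.card) ∧
    m = Nat.log 2 (minCoverSize f ↑Y)}

namespace SDNNF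

variable {V : Type}

lemma leaves_ne_nil : ∀ t : SDNNF V, t.leaves ≠ []
  | .leaf _ _ => List.cons_ne_nil _ _
  | .node l _ _ => by simpa [leaves] using fun h _ => leaves_ne_nil l h

lemma one_le_width : ∀ t : SDNNF V, t.Proper → 1 ≤ t.width
  | .leaf _ _, h => List.length_pos_iff.2 h
  | .node _ _ _, h => le_max_of_le_left (List.length_pos_iff.2 h.1)

lemma gateSat_lt_width {a : V → Bool} : ∀ {t : SDNNF V} {i : ℕ}, t.gateSat a i → i < t.width
  | .leaf _ _, _, ⟨_, hb, _⟩ => (List.getElem?_eq_some_iff.1 hb).1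
  | .node _ _ _, _, ⟨_, hc, _⟩ => lt_max_of_lt_left (List.getElem?_eq_some_iff.1 hc).1

lemma predDependsOn_gateSat : ∀ (t : SDNNF V) (g : ℕ),
    PredDependsOn (t.gateSat · g) {v | v ∈ t.leaves}
  | .leaf x _, _, a, b, h => by
      simp [gateSat, h x (List.mem_singleton_self x)]
  | .node l r _, _, a, b, h => by
      have hl g := predDependsOn_gateSat l g a b fun v hv => h v (List.mem_append_left _ hv)
      have hr g := predDependsOn_gateSat r g a b fun v hv => h v (List.mem_append_right _ hv)
      simp only [gateSat, hl, hr]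

inductive Context (V : Type) : Type
  | hole : Context V
  | left (c : Context V) (r : SDNNF V) (gs : List (List (ℕ × ℕ))) : Context V
  | right (l : SDNNF V) (c : Context V) (gs : List (List (ℕ × ℕ))) : Context V

namespace Context

def plug : Context V → SDNNF V → SDNNF V
  | hole, s => s
  | left c r gs, s => .node (c.plug s) r gs
  | right l c gs, s => .node l (c.plug s) gs

def leaves : Context V → List V
  | hole => []
  | left c r _ => c.leaves ++ r.leaves
  | right l c _ => l.leaves ++ c.leaves

/-- `c.gateSat a i g`: gate `g` of the top block is satisfied under `a` when, in the block
plugged into the hole, gate `i` is declared satisfied and all others are not. -/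
def gateSat : Context V → (V → Bool) → ℕ → ℕ → Prop
  | hole, _, i, g => g = i
  | left c r gs, a, i, g =>
      ∃ cl, gs[g]? = some cl ∧ ∃ p ∈ cl, c.gateSat a i p.1 ∧ r.gateSat a p.2
  | right l c gs, a, i, g =>
      ∃ cl, gs[g]? = some cl ∧ ∃ p ∈ cl, l.gateSat a p.1 ∧ c.gateSat a i p.2

lemma leaves_plug_perm (s : SDNNF V) :
    ∀ c : Context V, (c.plug s).leaves.Perm (c.leaves ++ s.leaves)
  | hole => by simp [plug, leaves]
  | left c r _ => by
      simp only [plug, SDNNF.leaves, leaves, List.append_assoc]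
      refine ((leaves_plug_perm s c).append_right _).trans ?_
      rw [List.append_assoc]
      exact List.perm_append_comm.append_left _
  | right l c _ => by
      simpa only [plug, SDNNF.leaves, leaves, List.append_assoc]
        using (leaves_plug_perm s c).append_left l.leaves

lemma width_le_width_plug (s : SDNNF V) : ∀ c : Context V, s.width ≤ (c.plug s).width
  | hole => le_rfl
  | left c _ _ => (width_le_width_plug s c).trans (le_max_of_le_right (le_max_left _ _))
  | right _ c _ => (width_le_width_plug s c).trans (le_max_of_le_right (le_max_right _ _))

/-- Satisfaction of a DNNF passes through exactly one gate of the block at the hole, since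
every ∧-gate sends the hole into only one of its two children. -/
lemma gateSat_plug_iff (s : SDNNF V) (a : V → Bool) :
    ∀ (c : Context V) (g : ℕ), (c.plug s).gateSat a g ↔ ∃ i, s.gateSat a i ∧ c.gateSat a i g
  | hole, g => by simp [plug, gateSat]
  | left c r gs, g => by
      simp only [plug, SDNNF.gateSat, gateSat, gateSat_plug_iff s a c]
      aesop
  | right l c gs, g => by
      simp only [plug, SDNNF.gateSat, gateSat, gateSat_plug_iff s a c]
      aesop

lemma predDependsOn_gateSat : ∀ (c : Context V) (i g : ℕ),
    PredDependsOn (c.gateSat · i g) {v | v ∈ c.leaves}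
  | hole, _, _, _, _, _ => Iff.rfl
  | left c r _, i, _, a, b, h => by
      have hc g := predDependsOn_gateSat c i g a b fun v hv => h v (List.mem_append_left _ hv)
      have hr g := SDNNF.predDependsOn_gateSat r g a b fun v hv => h v (List.mem_append_right _ hv)
      simp only [gateSat, hc, hr]
  | right l c _, i, _, a, b, h => by
      have hl g := SDNNF.predDependsOn_gateSat l g a b fun v hv => h v (List.mem_append_left _ hv)
      have hc g := predDependsOn_gateSat c i g a b fun v hv => h v (List.mem_append_right _ hv)
      simp only [gateSat, hl, hc]

end Context

/-- Descend into a child with more than `2n/3` leaves while there is one; the larger child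
of the last node then has more than `n/3`. -/
lemma exists_plug_balanced {n : ℕ} (hn : 2 ≤ n) :
    ∀ t : SDNNF V, 2 * n < 3 * t.leaves.length →
    ∃ (c : Context V) (s : SDNNF V), c.plug s = t ∧
      n ≤ 3 * s.leaves.length ∧ 3 * s.leaves.length ≤ 2 * n
  | .leaf _ _, ht => by simp [leaves] at ht; omega
  | .node l r gs, ht => by
      simp only [leaves, List.length_append] at ht
      by_cases hl : 2 * n < 3 * l.leaves.length
      · obtain ⟨c, s, rfl, hs⟩ := exists_plug_balanced hn l hl
        exact ⟨.left c r gs, s, rfl, hs⟩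
      by_cases hr : 2 * n < 3 * r.leaves.length
      · obtain ⟨c, s, rfl, hs⟩ := exists_plug_balanced hn r hr
        exact ⟨.right l c gs, s, rfl, hs⟩
      by_cases hl' : n ≤ 3 * l.leaves.length
      · exact ⟨.left .hole r gs, l, rfl, hl', by omega⟩
      · exact ⟨.right l .hole gs, r, rfl, by omega, by omega⟩

/-- The gates of the block at the hole give a rectangle cover: gate `i` contributes the
rectangle "`i` is satisfied inside `s`" × "the context accepts through `i`". -/
lemma minCoverSize_le_width (c : Context V) (s : SDNNF V) {f : (V → Bool) → Prop} {g : ℕ}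
    (hnodup : (c.plug s).leaves.Nodup) (hf : ∀ a, f a ↔ (c.plug s).gateSat a g) :
    minCoverSize f {v | v ∈ s.leaves} ≤ s.width := by
  have hdisj : ∀ v ∈ c.leaves, v ∉ s.leaves := by
    have := ((Context.leaves_plug_perm s c).nodup_iff.1 hnodup)
    exact fun v hc hs => (List.nodup_append.1 this).2.2 v hc v hs rfl
  refine Nat.sInf_le ⟨fun i a => s.gateSat a i, fun i a => c.gateSat a i g,
    fun i => ⟨predDependsOn_gateSat s i, ?_⟩, fun a => ?_⟩
  · exact fun a b h => Context.predDependsOn_gateSat c i g a b fun v hv => h v (hdisj v hv)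
  rw [hf, Context.gateSat_plug_iff]
  exact ⟨fun ⟨i, hi⟩ => ⟨⟨i, gateSat_lt_width hi.1⟩, hi⟩, fun ⟨i, hi⟩ => ⟨i, hi⟩⟩

end SDNNF

lemma two_pow_ccBest_le {V : Type} [Fintype V] [DecidableEq V] (f : (V → Bool) → Prop)
    (Y : Finset V) (hY : Fintype.card V ≤ 3 * Y.card)
    (hYc : Fintype.card V ≤ 3 * (Fintype.card V - Y.card)) :
    2 ^ ccBest f ≤ max 1 (minCoverSize f Y) := by
  have hcc : ccBest f ≤ Nat.log 2 (minCoverSize f Y) := Nat.sInf_le ⟨Y, hY, hYc, rfl⟩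
  rcases Nat.eq_zero_or_pos (minCoverSize f Y) with h0 | hpos
  · simp only [h0, Nat.log_zero_right, Nat.le_zero] at hcc
    simp [hcc]
  · exact le_max_of_le_right ((Nat.pow_le_pow_right two_pos hcc).trans
      (Nat.pow_log_le_self 2 hpos.ne'))

/-- With a single variable no partition is `1/3`-balanced, so `ccBest` is `sInf ∅ = 0`. -/
lemma ccBest_eq_zero_of_card_eq_one {V : Type} [Fintype V] [DecidableEq V]
    (f : (V → Bool) → Prop) (hV : Fintype.card V = 1) : ccBest f = 0 := by
  refine Nat.sInf_eq_zero.2 (Or.inr (Set.eq_empty_of_forall_notMem ?_))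
  rintro _ ⟨Y, hY, hYc, -⟩
  omega

/-- Every complete structured DNNF `D` computing `f` has width at least
`2^{cc_best^{1/3}(f)}`. -/
theorem stmt13 {V : Type} [Fintype V] [DecidableEq V]
    (D : SDNNF V) (f : (V → Bool) → Prop)
    (hnodup : D.leaves.Nodup) (hall : ∀ x : V, x ∈ D.leaves)
    (hproper : D.Proper)
    (hcomp : ∀ a, f a ↔ D.gateSat a 0) :
    2 ^ ccBest f ≤ D.width := by
  have hcard : D.leaves.length = Fintype.card V := by
    simpa using Fintype.card_congr (hnodup.getEquivOfForallMemList _ hall)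
  obtain hV | hV : Fintype.card V = 1 ∨ 2 ≤ Fintype.card V := by
    have := List.length_pos_iff.2 D.leaves_ne_nil
    omega
  · simpa [ccBest_eq_zero_of_card_eq_one f hV] using D.one_le_width hproper
  obtain ⟨c, s, rfl, hs, hs'⟩ := SDNNF.exists_plug_balanced hV D (by omega)
  have hY : s.leaves.toFinset.card = s.leaves.length :=
    List.toFinset_card_of_nodup ((c.leaves_plug_perm s).nodup_iff.1 hnodup).of_append_right
  have hYV := Finset.card_le_univ s.leaves.toFinset
  calc 2 ^ ccBest f ≤ max 1 (minCoverSize f s.leaves.toFinset) :=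
        two_pow_ccBest_le f _ (by omega) (by omega)
    _ ≤ max 1 s.width := by
        rw [List.coe_toFinset]
        exact max_le_max_left 1 (SDNNF.minCoverSize_le_width c s hnodup hcomp)
    _ ≤ (c.plug s).width := max_le ((c.plug s).one_le_width hproper) (c.width_le_width_plug s)
end
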